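/- arXiv:1706.00370 — 3 statements merged into one kernel-verified Lean document; each statement's English description precedes it below -/
import Mathlib

section
/- Let α ∈ (0, π/2), ν > 0, and let k₀ > 0 satisfy k₀ tanh k₀ = ν. Suppose φ : ℝ³ → ℝ is twice continuously differentiable on an open neighborhood of the closure of the layer W₁^(α), harmonic in W₁^(α) (Δφ = 0 there), and satisfies ∂φ/∂y(x, 0) = ν φ(x, 0) and ∂φ/∂y(x, −1) = 0 for every x ∈ F^(α). Then the function w(x) = ∫_{−1}^{0} φ(x, y) cosh(k₀(y + 1)) dy is twice continuously differentiable on F^(α) and satisfies the Helmholtz equation Δ_x w + k₀² w = 0 in F^(α), where Δ_x is the two-dimensional Laplacian in the variable x = (x₁, x₂). -/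
open MeasureTheory Real Set

noncomputable section

/-- The open plane sector `F^(α) = {x ∈ ℝ² : x₂ > -|x₁| tan α}`
whose vertex angle is `π + 2α`. -/
def Fsec (α : ℝ) : Set (ℝ × ℝ) := {x : ℝ × ℝ | x.2 > -|x.1| * Real.tan α}

/-- The sectorial water layer `W₁^(α) = F^(α) × (-1, 0)` of unit depth. -/
def W1 (α : ℝ) : Set ((ℝ × ℝ) × ℝ) := (Fsec α) ×ˢ Ioo (-1 : ℝ) 0

/-- The two-dimensional Laplacian of `w : ℝ × ℝ → ℝ`. -/
def lap2 (w : ℝ × ℝ → ℝ) (x : ℝ × ℝ) : ℝ :=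
  deriv (deriv (fun t => w (t, x.2))) x.1 + deriv (deriv (fun t => w (x.1, t))) x.2

/-- The three-dimensional Laplacian of `φ : (ℝ × ℝ) × ℝ → ℝ`,
points being written `(x, y)` with `x ∈ ℝ²`, `y ∈ ℝ`. -/
def lap3 (φ : (ℝ × ℝ) × ℝ → ℝ) (p : (ℝ × ℝ) × ℝ) : ℝ :=
  deriv (deriv (fun t => φ ((t, p.1.2), p.2))) p.1.1
    + deriv (deriv (fun t => φ ((p.1.1, t), p.2))) p.1.2
    + deriv (deriv (fun t => φ (p.1, t))) p.2

/-- The partial derivative `∂φ/∂y`. -/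
def dY (φ : (ℝ × ℝ) × ℝ → ℝ) (p : (ℝ × ℝ) × ℝ) : ℝ :=
  deriv (fun t => φ (p.1, t)) p.2

/-- `|∇φ|²`, the squared euclidean norm of the three-dimensional gradient of `φ`. -/
def gradSq (φ : (ℝ × ℝ) × ℝ → ℝ) (p : (ℝ × ℝ) × ℝ) : ℝ :=
  (deriv (fun t => φ ((t, p.1.2), p.2)) p.1.1) ^ 2
    + (deriv (fun t => φ ((p.1.1, t), p.2)) p.1.2) ^ 2
    + (deriv (fun t => φ (p.1, t)) p.2) ^ 2

/-!
Differentiation under the integral sign (the integrand is `C²` on a neighbourhood of the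
fibres `{x} × [-1, 0]`, `x ∈ F^(α)`) shows that `w` is `C²` and that
`Δₓw = ∫ Δₓφ · c = -∫ φ_yy · c` by harmonicity, where `c(y) = cosh (k₀ (y + 1))`.
The weight solves `c'' = k₀² c` with `c'(-1) = 0` and, by the dispersion relation,
`c'(0) = k₀ sinh k₀ = ν cosh k₀ = ν c(0)`. Hence in Green's identity
`∫ (φ_yy c - φ c'') = [φ_y c - φ c']₋₁⁰` the boundary conditions on `φ` kill the right-hand
side, and `Δₓw = -∫ φ c'' = -k₀² w`.
-/

open Filter Topology

universe u

section Slices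

variable {X E : Type*} [TopologicalSpace X] [NormedAddCommGroup E]
  {F : X × ℝ → E} {s : Set X} {a b : ℝ}

theorem continuousOn_slice (hF : ContinuousOn F (s ×ˢ uIcc a b)) {x : X} (hx : x ∈ s) :
    ContinuousOn (fun y => F (x, y)) (uIcc a b) :=
  hF.comp (by fun_prop) fun _ hy => ⟨hx, hy⟩

theorem aestronglyMeasurable_slice (hF : ContinuousOn F (s ×ˢ uIcc a b)) {x : X} (hx : x ∈ s) :
    AEStronglyMeasurable (fun y => F (x, y)) (volume.restrict (uIoc a b)) :=
  ((continuousOn_slice hF hx).mono uIoc_subset_uIcc).aestronglyMeasurable measurableSet_uIoc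

theorem eventually_norm_le_on_slices [LocallyCompactSpace X]
    (hF : ContinuousOn F (s ×ˢ uIcc a b)) (hs : IsOpen s) {x₀ : X} (hx₀ : x₀ ∈ s) :
    ∃ C, ∀ᶠ x in 𝓝 x₀, x ∈ s ∧ ∀ y ∈ uIcc a b, ‖F (x, y)‖ ≤ C := by
  obtain ⟨K, hK, hKs, hKc⟩ := local_compact_nhds (hs.mem_nhds hx₀)
  obtain ⟨C, hC⟩ := (hKc.prod isCompact_uIcc).exists_bound_of_continuousOn
    (hF.mono (Set.prod_mono hKs le_rfl))
  exact ⟨C, mem_of_superset hK fun x hx => ⟨hKs hx, fun y hy => hC _ ⟨hx, hy⟩⟩⟩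

theorem continuousOn_intervalIntegral_of_continuousOn [FirstCountableTopology X]
    [LocallyCompactSpace X] [NormedSpace ℝ E]
    (hF : ContinuousOn F (s ×ˢ uIcc a b)) (hs : IsOpen s) :
    ContinuousOn (fun x => ∫ y in a..b, F (x, y)) s := by
  intro x₀ hx₀
  obtain ⟨C, hC⟩ := eventually_norm_le_on_slices hF hs hx₀
  refine (intervalIntegral.continuousAt_of_dominated_interval (bound := fun _ => C) ?_ ?_
    intervalIntegrable_const ?_).continuousWithinAt
  · filter_upwards [hC] with x hx using aestronglyMeasurable_slice hF hx.1
  · filter_upwards [hC] with x hx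
    exact Eventually.of_forall fun y hy => hx.2 y (uIoc_subset_uIcc hy)
  · refine Eventually.of_forall fun y hy => ?_
    have hFy := hF (x₀, y) ⟨hx₀, uIoc_subset_uIcc hy⟩
    exact (hFy.comp (f := fun x => (x, y)) (by fun_prop)
      fun x hx => ⟨hx, uIoc_subset_uIcc hy⟩).continuousAt (hs.mem_nhds hx₀)

end Slices

section ParametricIntervalIntegral

variable {H E : Type*} [NormedAddCommGroup H] [NormedSpace ℝ H]
  [NormedAddCommGroup E] [NormedSpace ℝ E]

def partialFDerivFst (F : H × ℝ → E) (p : H × ℝ) : H →L[ℝ] E :=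
  (fderiv ℝ F p).comp (ContinuousLinearMap.inl ℝ H ℝ)

theorem DifferentiableAt.hasFDerivAt_partialFDerivFst {F : H × ℝ → E} {p : H × ℝ}
    (hF : DifferentiableAt ℝ F p) :
    HasFDerivAt (fun x => F (x, p.2)) (partialFDerivFst F p) p.1 :=
  hF.hasFDerivAt.comp p.1 (hasFDerivAt_prodMk_left p.1 p.2)

theorem contDiffOn_partialFDerivFst {F : H × ℝ → E} {V : Set (H × ℝ)} {n : WithTop ℕ∞}
    (hV : IsOpen V) (hF : ContDiffOn ℝ (n + 1) F V) :
    ContDiffOn ℝ n (partialFDerivFst F) V :=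
  ((ContinuousLinearMap.compL ℝ H (H × ℝ) E).flip
    (ContinuousLinearMap.inl ℝ H ℝ)).contDiff.comp_contDiffOn (hF.fderiv_of_isOpen hV le_rfl)

variable {F : H × ℝ → E} {V : Set (H × ℝ)} {s : Set H} {a b : ℝ}

theorem hasFDerivAt_intervalIntegral_of_contDiffOn [LocallyCompactSpace H] (hV : IsOpen V)
    (hF : ContDiffOn ℝ 1 F V) (hs : IsOpen s) (hsub : s ×ˢ uIcc a b ⊆ V) {x₀ : H}
    (hx₀ : x₀ ∈ s) :
    HasFDerivAt (fun x => ∫ y in a..b, F (x, y))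
      (∫ y in a..b, partialFDerivFst F (x₀, y)) x₀ := by
  have hF' : ContinuousOn (partialFDerivFst F) V :=
    (contDiffOn_partialFDerivFst (n := 0) hV (by simpa using hF)).continuousOn
  obtain ⟨C, hC⟩ := eventually_norm_le_on_slices (hF'.mono hsub) hs hx₀
  refine intervalIntegral.hasFDerivAt_integral_of_dominated_of_fderiv_le
    (F := fun x y => F (x, y)) (F' := fun x y => partialFDerivFst F (x, y))
    (bound := fun _ => C) hC ?_ ?_ (aestronglyMeasurable_slice (hF'.mono hsub) hx₀) ?_
    intervalIntegrable_const ?_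
  · filter_upwards [hs.mem_nhds hx₀] with x hx
      using aestronglyMeasurable_slice (hF.continuousOn.mono hsub) hx
  · exact (continuousOn_slice (hF.continuousOn.mono hsub) hx₀).intervalIntegrable
  · exact Eventually.of_forall fun y hy x hx => hx.2 y (uIoc_subset_uIcc hy)
  · refine Eventually.of_forall fun y hy x hx => ?_
    have hxy : (x, y) ∈ V := hsub ⟨hx.1, uIoc_subset_uIcc hy⟩
    exact ((hF.contDiffAt (hV.mem_nhds hxy)).differentiableAt one_ne_zero
      ).hasFDerivAt_partialFDerivFst

end ParametricIntervalIntegral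

theorem contDiffOn_intervalIntegral {H E : Type u} [NormedAddCommGroup H] [NormedSpace ℝ H]
    [LocallyCompactSpace H] [NormedAddCommGroup E] [NormedSpace ℝ E] (n : ℕ)
    {F : H × ℝ → E} {V : Set (H × ℝ)} (hV : IsOpen V) (hF : ContDiffOn ℝ n F V)
    {s : Set H} (hs : IsOpen s) {a b : ℝ} (hsub : s ×ˢ uIcc a b ⊆ V) :
    ContDiffOn ℝ n (fun x => ∫ y in a..b, F (x, y)) s := by
  induction n generalizing E with
  | zero =>
    simpa using continuousOn_intervalIntegral_of_continuousOn (hF.continuousOn.mono hsub) hs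
  | succ n ih =>
    have hF' : ContDiffOn ℝ (n + 1) F V := by exact_mod_cast hF
    have hderiv x (hx : x ∈ s) := hasFDerivAt_intervalIntegral_of_contDiffOn hV
      (hF'.of_le le_add_self) hs hsub hx
    rw [Nat.cast_succ, contDiffOn_succ_iff_fderiv_of_isOpen hs]
    refine ⟨fun x hx => (hderiv x hx).differentiableAt.differentiableWithinAt, by simp, ?_⟩
    exact (ih (contDiffOn_partialFDerivFst hV hF')).congr fun x hx => (hderiv x hx).fderiv

section RealParameter

variable {E : Type*} [NormedAddCommGroup E] [NormedSpace ℝ E]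
  {G : ℝ × ℝ → E} {V : Set (ℝ × ℝ)} {s : Set ℝ} {a b : ℝ}

theorem partialFDerivFst_apply_one {p : ℝ × ℝ} (hG : DifferentiableAt ℝ G p) :
    partialFDerivFst G p 1 = deriv (fun t => G (t, p.2)) p.1 :=
  hG.hasFDerivAt_partialFDerivFst.hasDerivAt.deriv.symm

theorem contDiffOn_deriv_fst {n : WithTop ℕ∞} (hV : IsOpen V)
    (hG : ContDiffOn ℝ (n + 1) G V) :
    ContDiffOn ℝ n (fun p : ℝ × ℝ => deriv (fun t => G (t, p.2)) p.1) V :=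
  ((ContinuousLinearMap.apply ℝ E (1 : ℝ)).contDiff.comp_contDiffOn
    (contDiffOn_partialFDerivFst hV hG)).congr fun p hp =>
      (partialFDerivFst_apply_one ((hG.contDiffAt (hV.mem_nhds hp)).differentiableAt
        (by simp))).symm

theorem hasDerivAt_intervalIntegral_of_contDiffOn (hV : IsOpen V) (hG : ContDiffOn ℝ 1 G V)
    (hs : IsOpen s) (hsub : s ×ˢ uIcc a b ⊆ V) {t₀ : ℝ} (ht₀ : t₀ ∈ s) :
    HasDerivAt (fun t => ∫ y in a..b, G (t, y))
      (∫ y in a..b, deriv (fun t => G (t, y)) t₀) t₀ := by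
  have hG' : ContinuousOn (partialFDerivFst G) V :=
    (contDiffOn_partialFDerivFst (n := 0) hV (by simpa using hG)).continuousOn
  have h := (hasFDerivAt_intervalIntegral_of_contDiffOn hV hG hs hsub ht₀).hasDerivAt
  rwa [ContinuousLinearMap.intervalIntegral_apply
      (continuousOn_slice (hG'.mono hsub) ht₀).intervalIntegrable,
    intervalIntegral.integral_congr fun y hy => partialFDerivFst_apply_one
      ((hG.contDiffAt (hV.mem_nhds (hsub ⟨ht₀, hy⟩))).differentiableAt one_ne_zero)] at h

theorem deriv_deriv_intervalIntegral (hV : IsOpen V) (hG : ContDiffOn ℝ 2 G V) (hs : IsOpen s)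
    (hsub : s ×ˢ uIcc a b ⊆ V) {t₀ : ℝ} (ht₀ : t₀ ∈ s) :
    deriv (deriv fun t => ∫ y in a..b, G (t, y)) t₀
      = ∫ y in a..b, deriv (deriv fun t => G (t, y)) t₀ := by
  have hderiv : deriv (fun t => ∫ y in a..b, G (t, y))
      =ᶠ[𝓝 t₀] fun t => ∫ y in a..b, deriv (fun t' => G (t', y)) t :=
    mem_of_superset (hs.mem_nhds ht₀) fun t ht =>
      (hasDerivAt_intervalIntegral_of_contDiffOn hV (hG.of_le one_le_two) hs hsub ht).deriv
  rw [hderiv.deriv_eq]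
  exact (hasDerivAt_intervalIntegral_of_contDiffOn hV (contDiffOn_deriv_fst hV hG) hs hsub
    ht₀).deriv

theorem intervalIntegrable_deriv_deriv (hV : IsOpen V) (hG : ContDiffOn ℝ 2 G V)
    (hsub : s ×ˢ uIcc a b ⊆ V) {t₀ : ℝ} (ht₀ : t₀ ∈ s) :
    IntervalIntegrable (fun y => deriv (deriv fun t => G (t, y)) t₀) volume a b :=
  (continuousOn_slice ((contDiffOn_deriv_fst (n := 0) hV
    (contDiffOn_deriv_fst hV hG)).continuousOn.mono hsub) ht₀).intervalIntegrable

end RealParameter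

theorem lap3_eq_lap2_add (φ : (ℝ × ℝ) × ℝ → ℝ) (x : ℝ × ℝ) (y : ℝ) :
    lap3 φ (x, y) = lap2 (fun x => φ (x, y)) x + deriv (deriv fun t => φ (x, t)) y :=
  rfl

theorem lap2_mul_const (w : ℝ × ℝ → ℝ) (c : ℝ) (x : ℝ × ℝ) :
    lap2 (fun x => w x * c) x = lap2 w x * c := by
  simp only [lap2, deriv_mul_const_field', add_mul]

theorem lap2_intervalIntegral {Φ : (ℝ × ℝ) × ℝ → ℝ} {U : Set ((ℝ × ℝ) × ℝ)} (hU : IsOpen U)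
    (hΦ : ContDiffOn ℝ 2 Φ U) {s : Set (ℝ × ℝ)} (hs : IsOpen s) {a b : ℝ}
    (hsub : s ×ˢ uIcc a b ⊆ U) {x : ℝ × ℝ} (hx : x ∈ s) :
    lap2 (fun x => ∫ y in a..b, Φ (x, y)) x = ∫ y in a..b, lap2 (fun x => Φ (x, y)) x := by
  have along_line (ℓ : ℝ → ℝ × ℝ) (hℓ : ContDiff ℝ 2 ℓ) (t₀ : ℝ) (ht₀ : ℓ t₀ = x) :
      deriv (deriv fun t => ∫ y in a..b, Φ (ℓ t, y)) t₀
          = ∫ y in a..b, deriv (deriv fun t => Φ (ℓ t, y)) t₀ ∧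
        IntervalIntegrable (fun y => deriv (deriv fun t => Φ (ℓ t, y)) t₀) volume a b := by
    have hV : IsOpen ((fun p : ℝ × ℝ => (ℓ p.1, p.2)) ⁻¹' U) :=
      hU.preimage (hℓ.continuous.prodMap continuous_id)
    have hG : ContDiffOn ℝ 2 (fun p : ℝ × ℝ => Φ (ℓ p.1, p.2))
        ((fun p : ℝ × ℝ => (ℓ p.1, p.2)) ⁻¹' U) :=
      hΦ.comp (hℓ.prodMap contDiff_id).contDiffOn (mapsTo_preimage _ _)
    have hsub' : (ℓ ⁻¹' s) ×ˢ uIcc a b ⊆ (fun p : ℝ × ℝ => (ℓ p.1, p.2)) ⁻¹' U :=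
      fun p hp => hsub ⟨hp.1, hp.2⟩
    have ht : t₀ ∈ ℓ ⁻¹' s := by simpa [mem_preimage, ht₀] using hx
    exact ⟨deriv_deriv_intervalIntegral hV hG (hs.preimage hℓ.continuous) hsub' ht,
      intervalIntegrable_deriv_deriv hV hG hsub' ht⟩
  obtain ⟨h₁, i₁⟩ := along_line (fun t => (t, x.2)) (by fun_prop) x.1 rfl
  obtain ⟨h₂, i₂⟩ := along_line (fun t => (x.1, t)) (by fun_prop) x.2 rfl
  rw [lap2, h₁, h₂, ← intervalIntegral.integral_add i₁ i₂]
  rfl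

theorem integral_deriv_deriv_mul_cosh {ψ : ℝ → ℝ} {V : Set ℝ} {k h ν : ℝ} (hV : IsOpen V)
    (hψ : ContDiffOn ℝ 2 ψ V) (hsub : uIcc (-h) 0 ⊆ V) (hroot : k * tanh (k * h) = ν)
    (htop : deriv ψ 0 = ν * ψ 0) (hbot : deriv ψ (-h) = 0) :
    ∫ y in (-h)..0, deriv (deriv ψ) y * cosh (k * (y + h))
      = k ^ 2 * ∫ y in (-h)..0, ψ y * cosh (k * (y + h)) := by
  have hψ' : ContDiffOn ℝ 1 (deriv ψ) V := hψ.deriv_of_isOpen hV (by norm_num)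
  have hψ_deriv : ∀ y ∈ uIcc (-h) 0, HasDerivAt ψ (deriv ψ y) y := fun y hy =>
    ((hψ.contDiffAt (hV.mem_nhds (hsub hy))).differentiableAt (by norm_num)).hasDerivAt
  have hψ'_deriv : ∀ y ∈ uIcc (-h) 0, HasDerivAt (deriv ψ) (deriv (deriv ψ) y) y :=
    fun y hy => ((hψ'.contDiffAt (hV.mem_nhds (hsub hy))).differentiableAt
      (by norm_num)).hasDerivAt
  have hlin y : HasDerivAt (fun z : ℝ => k * (z + h)) k y := by
    simpa using ((hasDerivAt_id y).add_const h).const_mul k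
  have hc_deriv y : HasDerivAt (fun z => cosh (k * (z + h))) (k * sinh (k * (y + h))) y := by
    simpa [mul_comm, Function.comp_def] using (hasDerivAt_cosh _).comp y (hlin y)
  have hc'_deriv y :
      HasDerivAt (fun z => k * sinh (k * (z + h))) (k ^ 2 * cosh (k * (y + h))) y := by
    simpa [pow_two, mul_assoc, mul_comm] using ((hasDerivAt_sinh _).comp y (hlin y)).const_mul k
  have hψ''c :
      IntervalIntegrable (fun y => deriv (deriv ψ) y * cosh (k * (y + h))) volume (-h) 0 :=
    ((hψ'.continuousOn_deriv_of_isOpen hV le_rfl).mono hsub).intervalIntegrable.mul_continuousOn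
      (by fun_prop)
  have hψc : IntervalIntegrable (fun y => k ^ 2 * (ψ y * cosh (k * (y + h)))) volume (-h) 0 :=
    ((hψ.continuousOn.mono hsub).intervalIntegrable.mul_continuousOn (by fun_prop)).const_mul _
  -- Green's identity: `ψ' c - ψ c'` is a primitive of `ψ'' c - ψ c''`.
  have green := intervalIntegral.integral_eq_sub_of_hasDerivAt
    (fun y hy => (((hψ'_deriv y hy).mul (hc_deriv y)).sub
      ((hψ_deriv y hy).mul (hc'_deriv y))).congr_deriv (by ring))
    (hψ''c.sub hψc)
  have hdisp : ν * cosh (k * h) = k * sinh (k * h) := by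
    rw [← hroot, tanh_eq_sinh_div_cosh]
    field_simp
  simp only [Pi.sub_apply, Pi.mul_apply, zero_add, neg_add_cancel, mul_zero, cosh_zero,
    sinh_zero, htop, hbot] at green
  rw [intervalIntegral.integral_sub hψ''c hψc, intervalIntegral.integral_const_mul] at green
  linear_combination green + ψ 0 * hdisp

theorem isOpen_Fsec (α : ℝ) : IsOpen (Fsec α) :=
  isOpen_lt (by fun_prop) continuous_snd

theorem Fsec_prod_uIcc_subset_closure_W1 (α : ℝ) :
    Fsec α ×ˢ uIcc (-1 : ℝ) 0 ⊆ closure (W1 α) := by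
  rw [W1, closure_prod_eq, closure_Ioo (by norm_num), uIcc_of_le (by norm_num)]
  exact Set.prod_mono subset_closure le_rfl

theorem aux_function_satisfies_helmholtz_general
    (α : ℝ) (ν k₀ : ℝ)
    (hroot : k₀ * Real.tanh k₀ = ν)
    (φ : (ℝ × ℝ) × ℝ → ℝ)
    (hsmooth : ∃ U : Set ((ℝ × ℝ) × ℝ), IsOpen U ∧ closure (W1 α) ⊆ U ∧ ContDiffOn ℝ 2 φ U)
    (hharm : ∀ p ∈ W1 α, lap3 φ p = 0)
    (hfs : ∀ x ∈ Fsec α, deriv (fun t => φ (x, t)) 0 = ν * φ (x, 0))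
    (hbot : ∀ x ∈ Fsec α, deriv (fun t => φ (x, t)) (-1) = 0) :
    ContDiffOn ℝ 2
        (fun x : ℝ × ℝ => ∫ y in Ioo (-1 : ℝ) 0, φ (x, y) * Real.cosh (k₀ * (y + 1)))
        (Fsec α) ∧
    ∀ x ∈ Fsec α,
      lap2 (fun x : ℝ × ℝ => ∫ y in Ioo (-1 : ℝ) 0, φ (x, y) * Real.cosh (k₀ * (y + 1))) x
        + k₀ ^ 2 * (∫ y in Ioo (-1 : ℝ) 0, φ (x, y) * Real.cosh (k₀ * (y + 1))) = 0 := by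
  obtain ⟨U, hU, hWU, hφ⟩ := hsmooth
  have hsub : Fsec α ×ˢ uIcc (-1 : ℝ) 0 ⊆ U := (Fsec_prod_uIcc_subset_closure_W1 α).trans hWU
  have hΦ : ContDiffOn ℝ 2 (fun p : (ℝ × ℝ) × ℝ => φ p * cosh (k₀ * (p.2 + 1))) U :=
    hφ.mul (by fun_prop)
  have hw x : ∫ y in Ioo (-1 : ℝ) 0, φ (x, y) * cosh (k₀ * (y + 1))
      = ∫ y in (-1 : ℝ)..0, φ (x, y) * cosh (k₀ * (y + 1)) := by
    rw [intervalIntegral.integral_of_le (by norm_num), integral_Ioc_eq_integral_Ioo]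
  simp only [hw]
  refine ⟨contDiffOn_intervalIntegral 2 hU hΦ (isOpen_Fsec α) hsub, fun x hx => ?_⟩
  have hψ : ContDiffOn ℝ 2 (fun t => φ (x, t)) ((fun t => (x, t)) ⁻¹' U) :=
    hφ.comp (by fun_prop) (mapsTo_preimage _ _)
  have hlap : ∫ y in (-1 : ℝ)..0, lap2 (fun x => φ (x, y) * cosh (k₀ * (y + 1))) x
      = -∫ y in (-1 : ℝ)..0, deriv (deriv fun t => φ (x, t)) y * cosh (k₀ * (y + 1)) := by
    rw [← intervalIntegral.integral_neg]
    refine intervalIntegral.integral_congr_Ioo_of_le (by norm_num) fun y hy => ?_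
    have hharm_xy := hharm (x, y) ⟨hx, hy⟩
    rw [lap3_eq_lap2_add] at hharm_xy
    rw [lap2_mul_const]
    linear_combination cosh (k₀ * (y + 1)) * hharm_xy
  rw [lap2_intervalIntegral hU hΦ (isOpen_Fsec α) hsub hx, hlap,
    ← integral_deriv_deriv_mul_cosh (hU.preimage (by fun_prop)) hψ (fun y hy => hsub ⟨hx, hy⟩)
      (by rwa [mul_one]) (hfs x hx) (hbot x hx), neg_add_cancel]

/-- John's auxiliary function `w(x) = ∫_{-1}^0 φ(x,y) cosh(k₀(y+1)) dy`
is twice continuously differentiable on `F^(α)` and satisfies the Helmholtz equation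
`Δₓw + k₀²w = 0` there. -/
theorem aux_function_satisfies_helmholtz
    (α : ℝ) (hα : α ∈ Ioo 0 (π / 2)) (ν k₀ : ℝ) (hν : 0 < ν) (hk₀ : 0 < k₀)
    (hroot : k₀ * Real.tanh k₀ = ν)
    (φ : (ℝ × ℝ) × ℝ → ℝ)
    (hsmooth : ∃ U : Set ((ℝ × ℝ) × ℝ), IsOpen U ∧ closure (W1 α) ⊆ U ∧ ContDiffOn ℝ 2 φ U)
    (hharm : ∀ p ∈ W1 α, lap3 φ p = 0)
    (hfs : ∀ x ∈ Fsec α, deriv (fun t => φ (x, t)) 0 = ν * φ (x, 0))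
    (hbot : ∀ x ∈ Fsec α, deriv (fun t => φ (x, t)) (-1) = 0) :
    ContDiffOn ℝ 2
        (fun x : ℝ × ℝ => ∫ y in Ioo (-1 : ℝ) 0, φ (x, y) * Real.cosh (k₀ * (y + 1)))
        (Fsec α) ∧
    ∀ x ∈ Fsec α,
      lap2 (fun x : ℝ × ℝ => ∫ y in Ioo (-1 : ℝ) 0, φ (x, y) * Real.cosh (k₀ * (y + 1))) x
        + k₀ ^ 2 * (∫ y in Ioo (-1 : ℝ) 0, φ (x, y) * Real.cosh (k₀ * (y + 1))) = 0 :=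
  aux_function_satisfies_helmholtz_general α ν k₀ hroot φ hsmooth hharm hfs hbot
end
end

section
/- Let ν > 0 and let k₀ > 0 satisfy k₀ tanh k₀ = ν. If f : [−1, 0] → ℝ is continuously differentiable and ∫_{−1}^{0} f(y) cosh(k₀(y + 1)) dy = 0, then |f(0)|² sinh² k₀ ≤ (1/2) (sinh² k₀ / ν − 1) ∫_{−1}^{0} |f'(y)|² dy; in particular ν |f(0)|² ≤ (1/2) ∫_{−1}^{0} |f'(y)|² dy. (Here one uses that ∫_{−1}^{0} sinh²(k₀(y + 1)) dy = (1/2)(sinh² k₀ / ν − 1).) -/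
open MeasureTheory Real Set

noncomputable section

/-! Integrating by parts against `w y = sinh (k₀ (y + 1))`, which vanishes at `-1` and whose
derivative `k₀ cosh (k₀ (y + 1))` is orthogonal to `f`, gives `f 0 * sinh k₀ = ∫ f' w`.
Cauchy–Schwarz bounds its square by `∫ f'² * ∫ w²`, and `∫ w² = (sinh² k₀ / ν - 1) / 2` since
`k₀ tanh k₀ = ν` turns `sinh k₀ cosh k₀ / k₀` into `sinh² k₀ / ν`. Dropping the `-1` gives the
second bound. -/

theorem sq_integral_mul_le_integral_sq_mul_integral_sq {α : Type*} [MeasurableSpace α]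
    {μ : Measure α} {u v : α → ℝ} (hu : Integrable (fun x => u x ^ 2) μ)
    (hv : Integrable (fun x => v x ^ 2) μ) (huv : Integrable (fun x => u x * v x) μ) :
    (∫ x, u x * v x ∂μ) ^ 2 ≤ (∫ x, u x ^ 2 ∂μ) * ∫ x, v x ^ 2 ∂μ := by
  have hquad : ∀ t : ℝ, 0 ≤ (∫ x, u x ^ 2 ∂μ) * (t * t) + 2 * (∫ x, u x * v x ∂μ) * t
      + ∫ x, v x ^ 2 ∂μ := fun t => by
    have hexpand : (fun x => (t * u x + v x) ^ 2)
        = fun x => t ^ 2 * u x ^ 2 + 2 * t * (u x * v x) + v x ^ 2 := by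
      funext x; ring
    have h : 0 ≤ ∫ x, (t * u x + v x) ^ 2 ∂μ := integral_nonneg fun x => sq_nonneg _
    rw [hexpand, integral_add _ hv, integral_add (hu.const_mul _) (huv.const_mul _),
      integral_const_mul, integral_const_mul] at h
    · linarith
    · exact (hu.const_mul _).add (huv.const_mul _)
  have := discrim_le_zero hquad
  rw [discrim] at this
  nlinarith

theorem integral_sinh_mul_sq {k : ℝ} (hk : k ≠ 0) (L : ℝ) :
    ∫ x in (0 : ℝ)..L, sinh (k * x) ^ 2 = sinh (k * L) * cosh (k * L) / (2 * k) - L / 2 := by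
  have hderiv : ∀ x : ℝ, HasDerivAt (fun x => sinh (k * x) * cosh (k * x) / (2 * k) - x / 2)
      (sinh (k * x) ^ 2) x := fun x => by
    have hlin : HasDerivAt (fun x => k * x) k x := by
      simpa using (hasDerivAt_id x).const_mul k
    have hsinh : HasDerivAt (fun x => sinh (k * x)) (cosh (k * x) * k) x :=
      (hasDerivAt_sinh _).comp x hlin
    have hcosh : HasDerivAt (fun x => cosh (k * x)) (sinh (k * x) * k) x :=
      (hasDerivAt_cosh _).comp x hlin
    refine (((hsinh.mul hcosh).div_const (2 * k)).sub
      ((hasDerivAt_id x).div_const 2)).congr_deriv ?_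
    field_simp
    linear_combination cosh_sq (k * x)
  rw [intervalIntegral.integral_eq_sub_of_hasDerivAt (fun x _ => hderiv x)
    ((by fun_prop : Continuous fun x => sinh (k * x) ^ 2).intervalIntegrable _ _)]
  simp

theorem sq_mul_le_integral_deriv_sq_mul_integral_sq {a b : ℝ} (hab : a < b) {f w w' : ℝ → ℝ}
    (hf : ContDiffOn ℝ 1 f (Icc a b)) (hw : ContinuousOn w (Icc a b))
    (hww' : ∀ x ∈ Ioo a b, HasDerivAt w (w' x) x) (hw' : IntervalIntegrable w' volume a b)
    (hwa : w a = 0) (horth : ∫ x in Ioo a b, f x * w' x = 0) :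
    (f b * w b) ^ 2 ≤ (∫ x in Ioo a b, deriv f x ^ 2) * ∫ x in Ioo a b, w x ^ 2 := by
  set g := derivWithin f (Icc a b)
  have hg : ContinuousOn g (Icc a b) := hf.continuousOn_derivWithin (uniqueDiffOn_Icc hab) le_rfl
  have hderiv : EqOn (deriv f) g (Ioo a b) := fun x hx =>
    (derivWithin_of_mem_nhds (Icc_mem_nhds hx.1 hx.2)).symm
  have hfg : ∀ x ∈ Ioo a b, HasDerivAt f (g x) x := fun x hx => hderiv hx ▸
    ((hf.differentiableOn one_ne_zero x (Ioo_subset_Icc_self hx)).differentiableAt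
      (Icc_mem_nhds hx.1 hx.2)).hasDerivAt
  have hparts : ∫ x in Ioo a b, g x * w x = f b * w b := by
    have := intervalIntegral.integral_mul_deriv_eq_deriv_mul_of_hasDerivAt (u := f) (v := w)
      (by simpa [hab.le] using hf.continuousOn) (by rwa [uIcc_of_le hab.le])
      (by simpa [hab.le] using hfg) (by simpa [hab.le] using hww')
      (hg.intervalIntegrable_of_Icc hab.le) hw'
    simp only [intervalIntegral.integral_of_le hab.le, integral_Ioc_eq_integral_Ioo, horth,
      hwa] at this
    linarith
  have integrableOn_Ioo {h : ℝ → ℝ} (hh : ContinuousOn h (Icc a b)) : IntegrableOn h (Ioo a b) :=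
    hh.integrableOn_Icc.mono_set Ioo_subset_Icc_self
  calc (f b * w b) ^ 2 = (∫ x in Ioo a b, g x * w x) ^ 2 := by rw [hparts]
    _ ≤ (∫ x in Ioo a b, g x ^ 2) * ∫ x in Ioo a b, w x ^ 2 :=
      sq_integral_mul_le_integral_sq_mul_integral_sq (integrableOn_Ioo (hg.pow 2))
        (integrableOn_Ioo (hw.pow 2)) (integrableOn_Ioo (hg.mul hw))
    _ = (∫ x in Ioo a b, deriv f x ^ 2) * ∫ x in Ioo a b, w x ^ 2 := by
      congr 1
      exact setIntegral_congr_fun measurableSet_Ioo fun x hx => by rw [hderiv hx]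

/-- if `k₀ tanh k₀ = ν`, `f` is `C¹` on `[-1,0]` and
`∫_{-1}^0 f(y) cosh(k₀(y+1)) dy = 0`, then
`|f(0)|² sinh² k₀ ≤ (1/2)(sinh² k₀/ν - 1) ∫ |f'|²`; in particular
`ν |f(0)|² ≤ (1/2) ∫ |f'|²`. -/
theorem pointwise_trace_bound (ν k₀ : ℝ) (hν : 0 < ν) (hk₀ : 0 < k₀)
    (hroot : k₀ * Real.tanh k₀ = ν) (f : ℝ → ℝ)
    (hf : ContDiffOn ℝ 1 f (Icc (-1 : ℝ) 0))
    (h0 : ∫ y in Ioo (-1 : ℝ) 0, f y * Real.cosh (k₀ * (y + 1)) = 0) :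
    (f 0) ^ 2 * (Real.sinh k₀) ^ 2
      ≤ (1 / 2) * ((Real.sinh k₀) ^ 2 / ν - 1) * ∫ y in Ioo (-1 : ℝ) 0, (deriv f y) ^ 2 ∧
    ν * (f 0) ^ 2 ≤ (1 / 2) * ∫ y in Ioo (-1 : ℝ) 0, (deriv f y) ^ 2 := by
  have hweight : ∫ y in Ioo (-1 : ℝ) 0, sinh (k₀ * (y + 1)) ^ 2
      = 1 / 2 * (sinh k₀ ^ 2 / ν - 1) := by
    rw [← integral_Ioc_eq_integral_Ioo, ← intervalIntegral.integral_of_le (by norm_num),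
      intervalIntegral.integral_comp_add_right (fun x => sinh (k₀ * x) ^ 2), neg_add_cancel,
      zero_add, integral_sinh_mul_sq hk₀.ne', ← hroot, tanh_eq_sinh_div_cosh]
    have := (sinh_pos_iff.2 hk₀).ne'
    field_simp
  have htrace := sq_mul_le_integral_deriv_sq_mul_integral_sq (by norm_num) hf
    (w := fun y => sinh (k₀ * (y + 1))) (w' := fun y => cosh (k₀ * (y + 1)) * k₀)
    (by fun_prop) (fun y _ => by simpa using (((hasDerivAt_id y).add_const 1).const_mul k₀).sinh)
    (by apply Continuous.intervalIntegrable; fun_prop) (by simp)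
    (by simp_rw [← mul_assoc]; rw [integral_mul_const, h0, zero_mul])
  simp only [zero_add, mul_one, hweight, mul_pow] at htrace
  set I := ∫ y in Ioo (-1 : ℝ) 0, deriv f y ^ 2
  have hI : 0 ≤ I := setIntegral_nonneg measurableSet_Ioo fun y _ => sq_nonneg _
  have hfirst : f 0 ^ 2 * sinh k₀ ^ 2 ≤ 1 / 2 * (sinh k₀ ^ 2 / ν - 1) * I := by linarith
  refine ⟨hfirst, le_of_mul_le_mul_right ?_ (pow_pos (sinh_pos_iff.2 hk₀) 2)⟩
  calc ν * f 0 ^ 2 * sinh k₀ ^ 2 ≤ ν * (1 / 2 * (sinh k₀ ^ 2 / ν - 1) * I) := by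
        rw [mul_assoc]; gcongr
    _ = 1 / 2 * I * sinh k₀ ^ 2 - ν / 2 * I := by field_simp
    _ ≤ 1 / 2 * I * sinh k₀ ^ 2 := sub_le_self _ (by positivity)
end
end

section
/- Let α ∈ (0, π/2), ν > 0, and let k > 0 satisfy ν + k tan k = 0. Suppose φ : ℝ³ → ℝ is twice continuously differentiable on an open neighborhood of the closure of the layer W₁^(α), harmonic in W₁^(α) (Δφ = 0 there), and satisfies ∂φ/∂y(x, 0) = ν φ(x, 0) and ∂φ/∂y(x, −1) = 0 for every x ∈ F^(α). Then the function u(x) = ∫_{−1}^{0} φ(x, y) cos(k(y + 1)) dy satisfies the modified Helmholtz equation Δ_x u − k² u = 0 in F^(α), where Δ_x is the two-dimensional Laplacian in the variable x = (x₁, x₂). -/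
/-!
Differentiating twice under the integral sign, `Δₓu(x)` is the integral of
`(∂₁² + ∂₂²)φ(x, y) cos(k(y + 1))`, which by harmonicity equals
`-∫ ∂_y²φ(x, y) cos(k(y + 1)) dy`.
Integrating by parts twice moves both `y`-derivatives onto `cos(k(y + 1))`, whose second
derivative is `-k² cos(k(y + 1))`; this produces `k² u(x)`. The boundary terms are
`φ(x, 0)(ν cos k + k sin k)` at `y = 0`, which vanishes because `ν + k tan k = 0`, and
`∂_yφ(x, -1)` at `y = -1`, which vanishes by the bottom condition.
-/

open MeasureTheory Real Set

noncomputable section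

open Filter Function Metric Topology

section SecondDerivativeAlongLines

variable {E F : Type*} [NormedAddCommGroup E] [NormedSpace ℝ E] [NormedAddCommGroup F]
  [NormedSpace ℝ F] {φ : E → F} {U : Set E}

theorem ContDiffOn.continuousOn_fderiv_fderiv_of_isOpen (hφ : ContDiffOn ℝ 2 φ U)
    (hU : IsOpen U) : ContinuousOn (fderiv ℝ (fderiv ℝ φ)) U :=
  (hφ.fderiv_of_isOpen hU (m := 1) le_rfl).continuousOn_fderiv_of_isOpen hU le_rfl

theorem ContDiffOn.hasDerivAt_fderiv_apply_comp (hφ : ContDiffOn ℝ 2 φ U) (hU : IsOpen U)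
    {L : ℝ → E} {v : E} {t : ℝ} (hL : HasDerivAt L v t) (ht : L t ∈ U) (w : E) :
    HasDerivAt (fun s => fderiv ℝ φ (L s) w) (fderiv ℝ (fderiv ℝ φ) (L t) v w) t := by
  have hd : DifferentiableAt ℝ (fderiv ℝ φ) (L t) :=
    ((hφ.fderiv_of_isOpen hU (m := 1) le_rfl).differentiableOn one_ne_zero).differentiableAt
      (hU.mem_nhds ht)
  simpa using (hd.hasFDerivAt.comp_hasDerivAt t hL).clm_apply (hasDerivAt_const t w)

theorem ContDiffOn.deriv_deriv_comp (hφ : ContDiffOn ℝ 2 φ U) (hU : IsOpen U)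
    {L : ℝ → E} {v : E} (hL : ∀ s, HasDerivAt L v s) {t : ℝ} (ht : L t ∈ U) :
    deriv (deriv fun s => φ (L s)) t = fderiv ℝ (fderiv ℝ φ) (L t) v v := by
  have hLU : ∀ᶠ s in 𝓝 t, L s ∈ U :=
    (hL t).continuousAt.preimage_mem_nhds (hU.mem_nhds ht)
  have hderiv : deriv (fun s => φ (L s)) =ᶠ[𝓝 t] fun s => fderiv ℝ φ (L s) v := by
    filter_upwards [hLU] with s hs
    exact (((hφ.differentiableOn two_ne_zero).differentiableAt (hU.mem_nhds hs)).hasFDerivAt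
      |>.comp_hasDerivAt s (hL s)).deriv
  rw [hderiv.deriv_eq]
  exact (hφ.hasDerivAt_fderiv_apply_comp hU (hL t) ht v).deriv

end SecondDerivativeAlongLines

section ParametricIntegral

variable {a b : ℝ} {G G' G'' : ℝ → ℝ → ℝ} {V : Set (ℝ × ℝ)}

theorem hasDerivAt_setIntegral_Ioo_of_continuousOn (hV : IsOpen V)
    (hG : ContinuousOn (uncurry G) V) (hG' : ContinuousOn (uncurry G') V)
    (hGG' : ∀ p ∈ V, HasDerivAt (G · p.2) (G' p.1 p.2) p.1) {t₀ : ℝ}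
    (ht₀ : ∀ y ∈ Icc a b, (t₀, y) ∈ V) :
    HasDerivAt (fun t => ∫ y in Ioo a b, G t y) (∫ y in Ioo a b, G' t₀ y) t₀ := by
  obtain ⟨ε, hε, hεV⟩ := nhds_basis_closedBall.eventually_iff.1 <|
    isCompact_Icc.eventually_forall_of_forall_eventually (P := fun t y => (t, y) ∈ V)
      fun y hy => hV.mem_nhds (ht₀ y hy)
  have hKV : closedBall t₀ ε ×ˢ Icc a b ⊆ V := fun p hp => hεV hp.1 p.2 hp.2
  obtain ⟨C, hC⟩ :=
    ((isCompact_closedBall t₀ ε).prod isCompact_Icc).exists_bound_of_continuousOn (hG'.mono hKV)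
  have hslice : ∀ {H : ℝ → ℝ → ℝ}, ContinuousOn (uncurry H) V →
      ∀ t ∈ closedBall t₀ ε, IntegrableOn (H t) (Ioo a b) := fun hH t ht =>
    ((hH.comp (Continuous.continuousOn (by fun_prop)) fun y hy => hεV ht y hy).integrableOn_Icc
      ).mono_set Ioo_subset_Icc_self
  have ht₀ε : t₀ ∈ closedBall t₀ ε := mem_closedBall_self hε.le
  refine (hasDerivAt_integral_of_dominated_loc_of_deriv_le (bound := fun _ => C)
    (closedBall_mem_nhds t₀ hε) ?_ (hslice hG t₀ ht₀ε)
    (hslice hG' t₀ ht₀ε).aestronglyMeasurable ?_ (integrableOn_const measure_Ioo_lt_top.ne) ?_).2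
  · filter_upwards [closedBall_mem_nhds t₀ hε] with t ht
    exact (hslice hG t ht).aestronglyMeasurable
  · exact ae_restrict_of_forall_mem measurableSet_Ioo fun y hy t ht =>
      hC (t, y) ⟨ht, Ioo_subset_Icc_self hy⟩
  · exact ae_restrict_of_forall_mem measurableSet_Ioo fun y hy t ht =>
      hGG' (t, y) (hεV ht y (Ioo_subset_Icc_self hy))

theorem deriv_deriv_setIntegral_Ioo_of_continuousOn (hV : IsOpen V)
    (hG : ContinuousOn (uncurry G) V) (hG' : ContinuousOn (uncurry G') V)
    (hG'' : ContinuousOn (uncurry G'') V)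
    (hGG' : ∀ p ∈ V, HasDerivAt (G · p.2) (G' p.1 p.2) p.1)
    (hG'G'' : ∀ p ∈ V, HasDerivAt (G' · p.2) (G'' p.1 p.2) p.1) {t₀ : ℝ}
    (ht₀ : ∀ y ∈ Icc a b, (t₀, y) ∈ V) :
    deriv (deriv fun t => ∫ y in Ioo a b, G t y) t₀ = ∫ y in Ioo a b, G'' t₀ y := by
  have hderiv : deriv (fun t => ∫ y in Ioo a b, G t y) =ᶠ[𝓝 t₀]
      fun t => ∫ y in Ioo a b, G' t y := by
    filter_upwards [isCompact_Icc.eventually_forall_of_forall_eventually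
      (P := fun t y => (t, y) ∈ V) fun y hy => hV.mem_nhds (ht₀ y hy)] with t ht
    exact (hasDerivAt_setIntegral_Ioo_of_continuousOn hV hG hG' hGG' ht).deriv
  rw [hderiv.deriv_eq]
  exact (hasDerivAt_setIntegral_Ioo_of_continuousOn hV hG' hG'' hG'G'' ht₀).deriv

end ParametricIntegral

theorem deriv_deriv_setIntegral_Ioo_comp_mul {E : Type*} [NormedAddCommGroup E]
    [NormedSpace ℝ E] {a b : ℝ} {φ : E × ℝ → ℝ} {U : Set (E × ℝ)} {c : ℝ → ℝ} {L : ℝ → E}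
    {w : E} (hφ : ContDiffOn ℝ 2 φ U) (hU : IsOpen U) (hc : Continuous c)
    (hL : ∀ s, HasDerivAt L w s) {t₀ : ℝ} (ht₀ : ∀ y ∈ Icc a b, (L t₀, y) ∈ U) :
    deriv (deriv fun t => ∫ y in Ioo a b, φ (L t, y) * c y) t₀
      = ∫ y in Ioo a b, fderiv ℝ (fderiv ℝ φ) (L t₀, y) (w, 0) (w, 0) * c y := by
  set Λ : ℝ × ℝ → E × ℝ := fun p => (L p.1, p.2)
  have hΛ : Continuous Λ :=
    ((continuous_iff_continuousAt.2 fun s => (hL s).continuousAt).comp continuous_fst).prodMk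
      continuous_snd
  have hline : ∀ p : ℝ × ℝ, HasDerivAt (fun s => Λ (s, p.2)) (w, 0) p.1 := fun p =>
    (hL p.1).prodMk (hasDerivAt_const _ _)
  have hcomp : ∀ {H : E × ℝ → ℝ}, ContinuousOn H U →
      ContinuousOn (fun p : ℝ × ℝ => H (Λ p) * c p.2) (Λ ⁻¹' U) := fun hH =>
    (hH.comp hΛ.continuousOn (mapsTo_preimage _ _)).mul (hc.comp continuous_snd).continuousOn
  have hφ' := hφ.continuousOn_fderiv_of_isOpen hU one_le_two
  have hφ'' := hφ.continuousOn_fderiv_fderiv_of_isOpen hU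
  exact deriv_deriv_setIntegral_Ioo_of_continuousOn (G := fun t y => φ (L t, y) * c y)
    (G' := fun t y => fderiv ℝ φ (L t, y) (w, 0) * c y)
    (G'' := fun t y => fderiv ℝ (fderiv ℝ φ) (L t, y) (w, 0) (w, 0) * c y)
    (hU.preimage hΛ)
    (hcomp hφ.continuousOn) (hcomp (hφ'.clm_apply continuousOn_const))
    (hcomp ((hφ''.clm_apply continuousOn_const).clm_apply continuousOn_const))
    (fun p hp => ((((hφ.differentiableOn two_ne_zero).differentiableAt
      (hU.mem_nhds hp)).hasFDerivAt.comp_hasDerivAt p.1 (hline p))).mul_const _)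
    (fun p hp => (hφ.hasDerivAt_fderiv_apply_comp hU (hline p) hp _).mul_const _) ht₀

theorem lap2_setIntegral_Ioo_mul {a b : ℝ} {φ : (ℝ × ℝ) × ℝ → ℝ} {U : Set ((ℝ × ℝ) × ℝ)}
    {c : ℝ → ℝ} {x : ℝ × ℝ} (hφ : ContDiffOn ℝ 2 φ U) (hU : IsOpen U) (hc : Continuous c)
    (hx : ∀ y ∈ Icc a b, (x, y) ∈ U) :
    lap2 (fun x => ∫ y in Ioo a b, φ (x, y) * c y) x
      = ∫ y in Ioo a b, (lap3 φ (x, y) - deriv (deriv fun t => φ (x, t)) y) * c y := by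
  have hφ'' := hφ.continuousOn_fderiv_fderiv_of_isOpen hU
  have hint : ∀ v : (ℝ × ℝ) × ℝ,
      IntegrableOn (fun y => fderiv ℝ (fderiv ℝ φ) (x, y) v v * c y) (Ioo a b) := fun v =>
    ((((hφ''.clm_apply continuousOn_const).clm_apply continuousOn_const).comp
      (Continuous.continuousOn (by fun_prop)) hx).mul hc.continuousOn).integrableOn_Icc
        |>.mono_set Ioo_subset_Icc_self
  have hlap3 : ∀ y ∈ Ioo a b, lap3 φ (x, y) - deriv (deriv fun t => φ (x, t)) y
      = fderiv ℝ (fderiv ℝ φ) (x, y) ((1, 0), 0) ((1, 0), 0)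
        + fderiv ℝ (fderiv ℝ φ) (x, y) ((0, 1), 0) ((0, 1), 0) := fun y hy => by
    have hxy := hx y (Ioo_subset_Icc_self hy)
    rw [lap3, hφ.deriv_deriv_comp hU (L := fun t => ((t, x.2), y)) (fun s =>
        ((hasDerivAt_id s).prodMk (hasDerivAt_const s _)).prodMk (hasDerivAt_const s _)) hxy,
      hφ.deriv_deriv_comp hU (L := fun t => ((x.1, t), y)) (fun s =>
        ((hasDerivAt_const s _).prodMk (hasDerivAt_id s)).prodMk (hasDerivAt_const s _)) hxy]
    ring
  rw [lap2, deriv_deriv_setIntegral_Ioo_comp_mul hφ hU hc (L := fun t => (t, x.2))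
      (fun s => (hasDerivAt_id' s).prodMk (hasDerivAt_const s _)) hx,
    deriv_deriv_setIntegral_Ioo_comp_mul hφ hU hc (L := fun t => (x.1, t))
      (fun s => (hasDerivAt_const s _).prodMk (hasDerivAt_id' s)) hx,
    ← integral_add (hint _) (hint _)]
  exact setIntegral_congr_fun measurableSet_Ioo fun y hy => by rw [hlap3 y hy]; ring

theorem integral_deriv_deriv_mul_eq {a b : ℝ} {f g : ℝ → ℝ} {V : Set ℝ} (hV : IsOpen V)
    (habV : uIcc a b ⊆ V) (hf : ContDiffOn ℝ 2 f V) (hg : ContDiffOn ℝ 2 g V) :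
    ∫ y in a..b, deriv (deriv f) y * g y
      = deriv f b * g b - f b * deriv g b - (deriv f a * g a - f a * deriv g a)
        + ∫ y in a..b, f y * deriv (deriv g) y := by
  have hderiv : ∀ {h : ℝ → ℝ}, ContDiffOn ℝ 2 h V →
      (∀ y ∈ uIcc a b, HasDerivAt h (deriv h y) y) ∧
      (∀ y ∈ uIcc a b, HasDerivAt (deriv h) (deriv (deriv h) y) y) ∧
      IntervalIntegrable (deriv h) volume a b ∧
      IntervalIntegrable (deriv (deriv h)) volume a b := fun hh => by
    have hh' := hh.deriv_of_isOpen hV (m := 1) le_rfl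
    have hh'' := hh'.deriv_of_isOpen hV (m := 0) le_rfl
    refine ⟨fun y hy => ?_, fun y hy => ?_, ?_, ?_⟩
    · exact ((hh.differentiableOn two_ne_zero).differentiableAt
        (hV.mem_nhds (habV hy))).hasDerivAt
    · exact ((hh'.differentiableOn one_ne_zero).differentiableAt
        (hV.mem_nhds (habV hy))).hasDerivAt
    · exact (hh'.continuousOn.mono habV).intervalIntegrable (μ := volume)
    · exact (hh''.continuousOn.mono habV).intervalIntegrable (μ := volume)
  obtain ⟨hf₁, hf₂, hf₁i, hf₂i⟩ := hderiv hf
  obtain ⟨hg₁, hg₂, hg₁i, hg₂i⟩ := hderiv hg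
  have hfg := intervalIntegral.integral_mul_deriv_eq_deriv_mul hg₁ hf₂ hg₁i hf₂i
  have hgf := intervalIntegral.integral_mul_deriv_eq_deriv_mul hf₁ hg₂ hf₁i hg₂i
  simp only [mul_comm (deriv g _) (deriv f _), mul_comm (g _) (deriv (deriv f) _)] at hfg
  linarith

theorem setIntegral_Ioo_deriv_deriv_mul_cos_eq {ν k : ℝ} {f : ℝ → ℝ} {V : Set ℝ}
    (hV : IsOpen V) (hIccV : Icc (-1 : ℝ) 0 ⊆ V) (hf : ContDiffOn ℝ 2 f V)
    (hroot : ν * cos k + k * sin k = 0)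
    (hf₀ : deriv f 0 = ν * f 0) (hf₁ : deriv f (-1) = 0) :
    ∫ y in Ioo (-1 : ℝ) 0, deriv (deriv f) y * cos (k * (y + 1))
      = -k ^ 2 * ∫ y in Ioo (-1 : ℝ) 0, f y * cos (k * (y + 1)) := by
  have hcos' : deriv (fun y => cos (k * (y + 1))) = fun y => -(k * sin (k * (y + 1))) := by
    funext y; simp [mul_comm]
  have hcos'' :
      deriv (fun y => -(k * sin (k * (y + 1)))) = fun y => -k ^ 2 * cos (k * (y + 1)) := by
    funext y; simp; ring
  have hIoo (h : ℝ → ℝ) : ∫ y in Ioo (-1 : ℝ) 0, h y = ∫ y in (-1 : ℝ)..0, h y := by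
    rw [intervalIntegral.integral_of_le (by norm_num), integral_Ioc_eq_integral_Ioo]
  rw [hIoo, hIoo, integral_deriv_deriv_mul_eq hV (by rwa [uIcc_of_le (by norm_num)]) hf
    (by fun_prop : ContDiff ℝ 2 fun y => cos (k * (y + 1))).contDiffOn, hcos', hcos'', hf₀, hf₁]
  simp only [mul_left_comm (f _) (-k ^ 2), intervalIntegral.integral_const_mul, neg_add_cancel,
    mul_zero, sin_zero, cos_zero, zero_add, mul_one]
  linear_combination f 0 * hroot

theorem mul_cos_add_mul_sin_eq_zero_of_add_mul_tan_eq_zero {ν k : ℝ} (hν : ν ≠ 0)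
    (h : ν + k * tan k = 0) : ν * cos k + k * sin k = 0 := by
  -- `tan k = 0` wherever `cos k = 0`, so `h` would force `ν = 0` there.
  have hcos : cos k ≠ 0 := fun h0 => hν (by simpa [tan_eq_sin_div_cos, h0] using h)
  rw [tan_eq_sin_div_cos] at h
  field_simp at h
  linarith

theorem mk_mem_closure_W1 {α : ℝ} {x : ℝ × ℝ} (hx : x ∈ Fsec α) {y : ℝ}
    (hy : y ∈ Icc (-1 : ℝ) 0) : (x, y) ∈ closure (W1 α) := by
  rw [W1, closure_prod_eq, closure_Ioo (by norm_num)]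
  exact ⟨subset_closure hx, hy⟩

theorem aux_function_satisfies_modified_helmholtz_general
    (α : ℝ) (ν k : ℝ) (hν : 0 < ν)
    (hroot : ν + k * Real.tan k = 0)
    (φ : (ℝ × ℝ) × ℝ → ℝ)
    (hsmooth : ∃ U : Set ((ℝ × ℝ) × ℝ), IsOpen U ∧ closure (W1 α) ⊆ U ∧ ContDiffOn ℝ 2 φ U)
    (hharm : ∀ p ∈ W1 α, lap3 φ p = 0)
    (hfs : ∀ x ∈ Fsec α, deriv (fun t => φ (x, t)) 0 = ν * φ (x, 0))
    (hbot : ∀ x ∈ Fsec α, deriv (fun t => φ (x, t)) (-1) = 0) :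
    ∀ x ∈ Fsec α,
      lap2 (fun x : ℝ × ℝ => ∫ y in Ioo (-1 : ℝ) 0, φ (x, y) * Real.cos (k * (y + 1))) x
        - k ^ 2 * (∫ y in Ioo (-1 : ℝ) 0, φ (x, y) * Real.cos (k * (y + 1))) = 0 := by
  obtain ⟨U, hU, hWU, hφ⟩ := hsmooth
  intro x hx
  have hseg : ∀ y ∈ Icc (-1 : ℝ) 0, (x, y) ∈ U := fun y hy => hWU (mk_mem_closure_W1 hx hy)
  have hharm_x : ∀ y ∈ Ioo (-1 : ℝ) 0,
      (lap3 φ (x, y) - deriv (deriv fun t => φ (x, t)) y) * cos (k * (y + 1))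
        = -(deriv (deriv fun t => φ (x, t)) y * cos (k * (y + 1))) := fun y hy => by
    rw [hharm (x, y) ⟨hx, hy⟩]; ring
  have hvert := setIntegral_Ioo_deriv_deriv_mul_cos_eq (f := fun t => φ (x, t))
    (hU.preimage (by fun_prop)) (fun y hy => hseg y hy)
    (hφ.comp (by fun_prop : ContDiff ℝ 2 fun t => (x, t)).contDiffOn fun _ ht => ht)
    (mul_cos_add_mul_sin_eq_zero_of_add_mul_tan_eq_zero hν.ne' hroot) (hfs x hx) (hbot x hx)
  rw [lap2_setIntegral_Ioo_mul hφ hU (by fun_prop) hseg,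
    setIntegral_congr_fun measurableSet_Ioo hharm_x, integral_neg, hvert]
  ring

/-- if `ν + k tan k = 0` with `k > 0`, then the function
`u(x) = ∫_{-1}^0 φ(x,y) cos(k(y+1)) dy` satisfies the modified Helmholtz equation
`Δₓu - k²u = 0` in `F^(α)`. -/
theorem aux_function_satisfies_modified_helmholtz
    (α : ℝ) (hα : α ∈ Ioo 0 (π / 2)) (ν k : ℝ) (hν : 0 < ν) (hk : 0 < k)
    (hroot : ν + k * Real.tan k = 0)
    (φ : (ℝ × ℝ) × ℝ → ℝ)
    (hsmooth : ∃ U : Set ((ℝ × ℝ) × ℝ), IsOpen U ∧ closure (W1 α) ⊆ U ∧ ContDiffOn ℝ 2 φ U)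
    (hharm : ∀ p ∈ W1 α, lap3 φ p = 0)
    (hfs : ∀ x ∈ Fsec α, deriv (fun t => φ (x, t)) 0 = ν * φ (x, 0))
    (hbot : ∀ x ∈ Fsec α, deriv (fun t => φ (x, t)) (-1) = 0) :
    ∀ x ∈ Fsec α,
      lap2 (fun x : ℝ × ℝ => ∫ y in Ioo (-1 : ℝ) 0, φ (x, y) * Real.cos (k * (y + 1))) x
        - k ^ 2 * (∫ y in Ioo (-1 : ℝ) 0, φ (x, y) * Real.cos (k * (y + 1))) = 0 :=
  aux_function_satisfies_modified_helmholtz_general α ν k hν hroot φ hsmooth hharm hfs hbot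
end
end
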